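/- arXiv:0811.3547 — 12 statements merged into one kernel-verified Lean document; each statement's English description precedes it below -/
import Mathlib

section
/- Let C be a small category, J a Grothendieck topology on C, and a_J : [Cᵒᵖ, Type] ⥤ Sh(C,J) the sheafification functor (left adjoint to the inclusion of sheaves into presheaves). If a presheaf P is an atom of the presheaf category [Cᵒᵖ, Type] and its sheafification a_J(P) is not an initial object of Sh(C,J), then a_J(P) is an atom of Sh(C,J). -/
open CategoryTheory CategoryTheory.Limits

universe u

/-- An object `A` of a category is an *atom* if it is not initial and every
monomorphism into it is either an isomorphism or has initial domain. -/
def IsAtomObj {E : Type*} [Category E] (A : E) : Prop :=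
  (¬ Nonempty (IsInitial A)) ∧
    ∀ ⦃S : E⦄ (m : S ⟶ A), Mono m → (IsIso m ∨ Nonempty (IsInitial S))

/-!
For a reflective subcategory with left exact reflector `L ⊣ R`, a subobject `m : S ⟶ L P` is
recovered, up to isomorphism, by pulling back `R m` along the unit `P ⟶ R (L P)` and applying `L`:
since `L` inverts the unit and preserves the pullback, `L` of the pulled-back subobject of `P` is
`m`. So if `P` has no proper nontrivial subobjects, neither has `L P`.
-/

namespace CategoryTheory.Adjunction

variable {C D : Type*} [Category C] [Category D] {L : C ⥤ D} {R : D ⥤ C}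
  {P : C} {S : D} {m : S ⟶ L.obj P} {Q : C} {fst : Q ⟶ R.obj S} {snd : Q ⟶ P}

lemma map_fst_comp_counit_comp (adj : L ⊣ R) (sq : CommSq fst snd (R.map m) (adj.unit.app P)) :
    (L.map fst ≫ adj.counit.app S) ≫ m = L.map snd := by
  rw [Category.assoc, ← adj.counit_naturality m, ← Category.assoc, ← L.map_comp, sq.w,
    L.map_comp, Category.assoc, adj.left_triangle_components, Category.comp_id]

lemma isIso_map_fst_comp_counit (adj : L ⊣ R) [R.Full] [R.Faithful]
    [PreservesLimit (cospan (R.map m) (adj.unit.app P)) L]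
    (hpb : IsPullback fst snd (R.map m) (adj.unit.app P)) :
    IsIso (L.map fst ≫ adj.counit.app S) :=
  have := (hpb.map L).isIso_fst_of_isIso
  inferInstance

lemma isAtomObj_obj_of_isAtomObj (adj : L ⊣ R) [R.Full] [R.Faithful] [HasPullbacks C]
    [PreservesLimitsOfShape WalkingCospan L]
    (hP : IsAtomObj P) (h : ¬ Nonempty (IsInitial (L.obj P))) :
    IsAtomObj (L.obj P) := by
  refine ⟨h, fun S m hm => ?_⟩
  have hpb := IsPullback.of_hasPullback (R.map m) (adj.unit.app P)
  have := adj.isIso_map_fst_comp_counit hpb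
  let e : L.obj (pullback (R.map m) (adj.unit.app P)) ≅ S :=
    asIso (L.map (pullback.fst _ _) ≫ adj.counit.app S)
  have he : e.hom ≫ m = L.map (pullback.snd _ _) := adj.map_fst_comp_counit_comp hpb.toCommSq
  have : Mono (R.map m) := by have := adj.isRightAdjoint; infer_instance
  rcases hP.2 _ hpb.mono_snd_of_mono with hsnd | ⟨⟨hQ⟩⟩
  · rw [← e.eq_inv_comp] at he
    exact Or.inl (he ▸ inferInstance)
  · have := adj.leftAdjoint_preservesColimits
    exact Or.inr ⟨(hQ.isInitialObj L _).ofIso e⟩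

end CategoryTheory.Adjunction

/-- Sheafification sends atoms of the presheaf category to atoms of the sheaf
category, provided the sheafification is not initial. -/
theorem stmt0 {C : Type u} [SmallCategory C] (J : GrothendieckTopology C)
    (P : Cᵒᵖ ⥤ Type u) (hP : IsAtomObj P)
    (h : ¬ Nonempty (IsInitial ((presheafToSheaf J (Type u)).obj P))) :
    IsAtomObj ((presheafToSheaf J (Type u)).obj P) :=
  (sheafificationAdjunction J (Type u)).isAtomObj_obj_of_isAtomObj hP h
end

section
/- Let C be a small category and J ≤ K two Grothendieck topologies on C. If F is a J-sheaf of types which is an atom of Sh(C,J), and the K-sheafification a_K(F) of its underlying presheaf is not an initial object of Sh(C,K), then a_K(F) is an atom of Sh(C,K). -/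
/-! Restricted to `J`-sheaves, `a_K` is a left exact reflector `L : Sh(C,J) ⥤ Sh(C,K)` whose
right adjoint `R` is the inclusion. Pull a subobject `m : S ⟶ L F` back along the unit
`F ⟶ R (L F)`. If the pullback is all of `F`, the unit factors through `R m`, so `m` is split epi.
If it is initial, then applying `L`, which preserves pullbacks and initial objects and inverts the
unit, exhibits `S ≅ L (R S)` as the image of an initial object. -/

open CategoryTheory CategoryTheory.Limits

universe u

section

variable {D E : Type*} [Category D] [Category E] {L : D ⥤ E} {R : E ⥤ D}

theorem CategoryTheory.Adjunction.isIso_of_unit_factors_through (adj : L ⊣ R) {A : D} {S : E}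
    (m : S ⟶ L.obj A) [Mono m] (s : A ⟶ R.obj S) (hs : s ≫ R.map m = adj.unit.app A) :
    IsIso m := by
  have hσ : (adj.homEquiv _ _).symm s ≫ m = 𝟙 _ := by
    rw [← adj.homEquiv_naturality_right_symm, hs, Adjunction.homEquiv_counit]
    simp
  have : IsSplitEpi m := ⟨⟨⟨_, hσ⟩⟩⟩
  exact isIso_of_mono_of_isSplitEpi m

theorem CategoryTheory.Adjunction.nonempty_isInitial_of_isPullback_unit (adj : L ⊣ R)
    [R.Full] [R.Faithful] [PreservesLimitsOfShape WalkingCospan L] {A T : D} {S : E}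
    {m : S ⟶ L.obj A} {fst : T ⟶ R.obj S} {t : T ⟶ A}
    (hpb : IsPullback fst t (R.map m) (adj.unit.app A)) (hT : Nonempty (IsInitial T)) :
    Nonempty (IsInitial S) := by
  have := adj.leftAdjoint_preservesColimits
  have : IsIso (L.map fst) := (hpb.map L).isIso_fst_of_isIso
  exact hT.map fun hT => (hT.isInitialObj L).ofIso (asIso (L.map fst) ≪≫ asIso (adj.counit.app S))

theorem IsAtomObj.obj_of_adjunction (adj : L ⊣ R) [R.Full] [R.Faithful] [HasPullbacks D]
    [PreservesLimitsOfShape WalkingCospan L] {A : D} (hA : IsAtomObj A)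
    (hLA : ¬ Nonempty (IsInitial (L.obj A))) : IsAtomObj (L.obj A) := by
  refine ⟨hLA, fun S m hm => ?_⟩
  have := adj.isRightAdjoint
  let t := pullback.snd (R.map m) (adj.unit.app A)
  rcases hA.2 t inferInstance with ht | hT
  · refine .inl (adj.isIso_of_unit_factors_through m (inv t ≫ pullback.fst _ _) ?_)
    simp [t, pullback.condition]
  · exact .inr (adj.nonempty_isInitial_of_isPullback_unit (.of_hasPullback _ _) hT)

end

namespace CategoryTheory.GrothendieckTopology

variable {C : Type*} [Category C] {J K : GrothendieckTopology C} {A : Type*} [Category A]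

abbrev sheafInclusionOfLE (hJK : J ≤ K) : Sheaf K A ⥤ Sheaf J A :=
  ObjectProperty.ιOfLE fun _ hP => Presheaf.IsSheaf.of_le hJK hP

noncomputable def sheafificationAdjunctionOfLE [HasWeakSheafify K A] (hJK : J ≤ K) :
    sheafToPresheaf J A ⋙ presheafToSheaf K A ⊣ sheafInclusionOfLE hJK :=
  (sheafificationAdjunction K A).restrictFullyFaithful (fullyFaithfulSheafToPresheaf J A)
    (Functor.FullyFaithful.id _) (Iso.refl _) (Iso.refl _)

end CategoryTheory.GrothendieckTopology

/-- If `J ≤ K`, an atom `F` of `Sh(C,J)` whose `K`-sheafification is not initial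
has `K`-sheafification an atom of `Sh(C,K)`. -/
theorem stmt1 {C : Type u} [SmallCategory C] (J K : GrothendieckTopology C)
    (hJK : J ≤ K) (F : Sheaf J (Type u)) (hF : IsAtomObj F)
    (h : ¬ Nonempty (IsInitial ((presheafToSheaf K (Type u)).obj F.val))) :
    IsAtomObj ((presheafToSheaf K (Type u)).obj F.val) :=
  hF.obj_of_adjunction (GrothendieckTopology.sheafificationAdjunctionOfLE hJK) h
end

section
/- Let C be a small category, J a Grothendieck topology on C, and S a separating set of objects of Sh(C,J) each of which is an atom. Then an object X of Sh(C,J) is an atom if and only if there exist an object a ∈ S and an epimorphism a ⟶ X in Sh(C,J). -/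
/-!
The argument only uses exactness properties of `Sh(C, J)`: it is finitary extensive (initial
objects are strict and coproducts are disjoint), balanced, has images, and its epimorphisms,
being the locally surjective morphisms, are stable under pullback.

By disjointness the two coprojections `X ⟶ X ⨿ X` agree only when `X` is initial, so a separating
set admits a morphism `h : a ⟶ X` into every non-initial `X`; if `X` is an atom, the image of `h`
is all of `X`, since otherwise `a` would map to an initial object and so be initial. Conversely, given an epimorphism
`e : a ⟶ X` out of an atom and a subobject `T ↪ X`, its pullback along `e` is either all of `a`,
so that `T ↪ X` is epi and hence iso, or initial, and then `T` receives an epimorphism from an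
initial object, which again by disjointness forces `T` to be initial.
-/

open CategoryTheory CategoryTheory.Limits

universe u

universe w

namespace CategoryTheory.Sheaf

open Opposite

variable {C : Type*} [Category* C] (J : GrothendieckTopology C) [HasSheafify J (Type w)]

instance epimorphisms_isStableUnderBaseChange :
    (MorphismProperty.epimorphisms (Sheaf J (Type w))).IsStableUnderBaseChange where
  of_isPullback {X Y Y' S f g f' g'} sq hg := by
    rw [MorphismProperty.epimorphisms.iff, ← isLocallySurjective_iff_epi] at hg ⊢
    refine ⟨fun {U} x =>
      J.superset_covering ?_ (Presheaf.imageSieve_mem J g.hom (f.hom.app (op U) x))⟩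
    rintro V h ⟨y, hy⟩
    obtain ⟨p, -, hp⟩ := Types.exists_of_isPullback
      (sq.map (sheafToPresheaf J _ ⋙ (evaluation _ _).obj (op V))) y (X.obj.map h.op x)
      (by simpa [NatTrans.naturality_apply] using hy)
    exact ⟨p, hp⟩

end CategoryTheory.Sheaf

namespace CategoryTheory.Limits

variable {E : Type*} [Category* E] [FinitaryExtensive E]

theorem FinitaryExtensive.nonempty_isInitial_of_coprod_inl_eq_inr {X : E}
    (h : (coprod.inl : X ⟶ X ⨿ X) = coprod.inr) : Nonempty (IsInitial X) := by
  have hdisjoint := FinitaryExtensive.isPullback_initial_to_binaryCofan (coprodIsCoprod X X)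
  have hdiag : IsPullback (𝟙 X) (𝟙 X) coprod.inl coprod.inr := h ▸ IsKernelPair.id_of_mono _
  exact ⟨initialIsInitial.ofIso (hdisjoint.isoIsPullback _ _ hdiag)⟩

theorem IsInitial.nonempty_isInitial_of_epi {I X : E} (hI : IsInitial I) (e : I ⟶ X) [Epi e] :
    Nonempty (IsInitial X) :=
  FinitaryExtensive.nonempty_isInitial_of_coprod_inl_eq_inr ((cancel_epi e).1 (hI.hom_ext _ _))

end CategoryTheory.Limits

namespace IsAtomObj

variable {E : Type*} [Category* E] [FinitaryExtensive E]

theorem of_epi [HasPullbacks E] [Balanced E]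
    [(MorphismProperty.epimorphisms E).IsStableUnderBaseChange]
    {a X : E} (ha : IsAtomObj a) (e : a ⟶ X) [Epi e] : IsAtomObj X := by
  refine ⟨fun ⟨hX⟩ => ha.1 ⟨IsInitial.ofStrict e hX⟩, fun T m hm => ?_⟩
  rcases ha.2 (pullback.fst e m) inferInstance with hiso | hP
  · have hfac : (inv (pullback.fst e m) ≫ pullback.snd e m) ≫ m = e := by
      simp [← pullback.condition]
    have : Epi m := epi_of_epi_fac hfac
    exact .inl (isIso_of_mono_of_epi m)
  · have : Epi (pullback.snd e m) :=
      MorphismProperty.of_isPullback (P := .epimorphisms E) (.of_hasPullback e m) ‹Epi e›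
    exact .inr (IsInitial.nonempty_isInitial_of_epi hP.some (pullback.snd e m))

theorem exists_epi_of_isSeparating [HasImages E] [HasEqualizers E] {S : ObjectProperty E}
    (hS : S.IsSeparating) (hS₀ : ∀ a, S a → ¬ Nonempty (IsInitial a)) {X : E}
    (hX : IsAtomObj X) : ∃ a, S a ∧ ∃ e : a ⟶ X, Epi e := by
  obtain ⟨a, ha, ⟨h⟩⟩ : ∃ a, S a ∧ Nonempty (a ⟶ X) := by
    by_contra! hempty
    exact hX.1 (FinitaryExtensive.nonempty_isInitial_of_coprod_inl_eq_inr
      (hS _ _ fun a ha h => (hempty a ha).elim h))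
  refine ⟨a, ha, h, ?_⟩
  rcases hX.2 (image.ι h) inferInstance with hiso | hI
  · rw [← image.fac h]
    infer_instance
  · exact absurd ⟨IsInitial.ofStrict (factorThruImage h) hI.some⟩ (hS₀ a ha)

end IsAtomObj

/-- If `Sh(C,J)` has a separating set of atoms `S`, then the atoms of `Sh(C,J)`
are exactly the epimorphic images of objects of `S`. -/
theorem stmt2 {C : Type u} [SmallCategory C] (J : GrothendieckTopology C)
    (S : Set (Sheaf J (Type u))) (hsep : ObjectProperty.IsSeparating S)
    (hatom : ∀ a ∈ S, IsAtomObj a) (X : Sheaf J (Type u)) :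
    IsAtomObj X ↔ ∃ a ∈ S, ∃ e : a ⟶ X, Epi e :=
  ⟨fun hX => hX.exists_epi_of_isSeparating hsep fun a ha => (hatom a ha).1,
    fun ⟨a, ha, e, _⟩ => (hatom a ha).of_epi e⟩
end

section
/- Let C be a small category, J a Grothendieck topology on C, and S a separating set of objects of Sh(C,J) each of which is an atom. Then the full subcategory of Sh(C,J) on the objects of S satisfies the right Ore condition: for any morphisms f : a ⟶ c and g : b ⟶ c between objects of S there exist d ∈ S and morphisms p : d ⟶ a, q : d ⟶ b with p ≫ f = q ≫ g. -/
/-!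
Initial objects of `Sh(C,J)` are strict, so a morphism from a non-initial object to an atom has a
non-initial image, which must then be the whole atom: the morphism is epi. Hence in a cospan
`a ⟶ c ⟵ b` of atoms both legs are epi, and since local surjectivity is stable under pullback,
`a ×_c b ⟶ a` is epi. An epimorphism out of an initial object has initial codomain, so the
pullback is not initial, and a separating set then contains some `d` mapping to it.

Strictness and the fact about epimorphisms both come from the sheaf `Ω` of closed sieves: `X` is
initial exactly when the maps `X ⟶ Ω` constant at `⊤` and at `J.close ⊥` agree, i.e. when
every section of `X` lives over an object covered by the empty sieve.
-/

open CategoryTheory CategoryTheory.Limits Opposite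

universe u

universe v w

lemma IsAtomObj.epi_of_not_isInitial {E : Type*} [Category E] [HasStrictInitialObjects E]
    [HasImages E] [HasEqualizers E] {X Z : E} (hZ : IsAtomObj Z)
    (hX : ¬ Nonempty (IsInitial X)) (f : X ⟶ Z) : Epi f := by
  rcases hZ.2 (image.ι f) inferInstance with hiso | hI
  · rw [← image.fac f]
    exact epi_comp _ _
  · exact (hX ⟨hI.some.ofStrict (factorThruImage f)⟩).elim

namespace CategoryTheory.Sheaf

variable {C : Type u} [Category.{v} C] {J : GrothendieckTopology C}

section BotCover

variable (Y : Sheaf J (Type w)) {V : Cᵒᵖ} (hV : ⊥ ∈ J V.unop)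
include hV

lemma nonempty_obj_of_bot_mem : Nonempty (Y.obj.obj V) :=
  ⟨(Types.isTerminalEquivUnique _ (Y.isTerminalOfBotCover V.unop hV)).default⟩

lemma subsingleton_obj_of_bot_mem : Subsingleton (Y.obj.obj V) :=
  (Types.isTerminalEquivUnique _ (Y.isTerminalOfBotCover V.unop hV)).instSubsingleton

end BotCover

noncomputable def isInitialOfBotMem (X : Sheaf J (Type w))
    (h : ∀ (V : Cᵒᵖ), X.obj.obj V → ⊥ ∈ J V.unop) : IsInitial X :=
  IsInitial.ofUniqueHom
    (fun Y => ⟨{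
      app V := TypeCat.ofHom fun s => (Y.nonempty_obj_of_bot_mem (h V s)).some
      naturality V W t := by
        ext s
        exact (Y.subsingleton_obj_of_bot_mem (h W (X.obj.map t s))).elim _ _ }⟩)
    (fun Y m => by
      ext V s
      exact (Y.subsingleton_obj_of_bot_mem (h V s)).elim _ _)

lemma exists_pullback_section {X Y Z : Sheaf J (Type w)} (f : X ⟶ Z) (g : Y ⟶ Z) {V : Cᵒᵖ}
    (x : X.obj.obj V) (y : Y.obj.obj V) (hxy : f.hom.app V x = g.hom.app V y) :
    ∃ z, (pullback.fst f g).hom.app V z = x ∧ (pullback.snd f g).hom.app V z = y := by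
  let Γ := sheafToPresheaf J (Type w) ⋙ (evaluation Cᵒᵖ (Type w)).obj V
  have hΓ := isLimitOfHasPullbackOfPreservesLimit Γ f g
  exact ⟨(PullbackCone.IsLimit.equivPullbackObj hΓ).symm ⟨(x, y), hxy⟩,
    PullbackCone.IsLimit.equivPullbackObj_symm_apply_fst hΓ _,
    PullbackCone.IsLimit.equivPullbackObj_symm_apply_snd hΓ _⟩

instance isLocallySurjective_pullback_fst {X Y Z : Sheaf J (Type w)} (f : X ⟶ Z) (g : Y ⟶ Z)
    [IsLocallySurjective g] : IsLocallySurjective (pullback.fst f g) where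
  imageSieve_mem {U} x := by
    refine J.superset_covering ?_ (Presheaf.imageSieve_mem J g.hom (f.hom.app (op U) x))
    rintro W h ⟨y, hy⟩
    obtain ⟨z, hz, -⟩ := exists_pullback_section f g (X.obj.map h.op x) y
      ((NatTrans.naturality_apply f.hom h.op x).trans hy.symm)
    exact ⟨z, hz⟩

def toΩTop (X : Sheaf J (Type max u v)) : X ⟶ Ω J :=
  ⟨{ app _ := TypeCat.ofHom fun _ => ⟨(⊤ : Sieve _), fun _ _ _ => trivial⟩
     naturality _ _ h := by
       ext
       exact Subtype.ext (Sieve.pullback_top (f := h.unop)).symm }⟩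

def toΩCloseBot (X : Sheaf J (Type max u v)) : X ⟶ Ω J :=
  ⟨{ app _ := TypeCat.ofHom fun _ => ⟨J.close ⊥, J.close_isClosed ⊥⟩
     naturality _ _ h := by
       ext
       refine Subtype.ext ?_
       change J.close ⊥ = (J.close ⊥).pullback h.unop
       rw [← J.pullback_close, Sieve.pullback_bot] }⟩

@[simp]
lemma comp_toΩTop {X Y : Sheaf J (Type max u v)} (f : X ⟶ Y) : f ≫ toΩTop Y = toΩTop X := rfl

@[simp]
lemma comp_toΩCloseBot {X Y : Sheaf J (Type max u v)} (f : X ⟶ Y) :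
    f ≫ toΩCloseBot Y = toΩCloseBot X := rfl

lemma nonempty_isInitial_iff_toΩTop_eq_toΩCloseBot (X : Sheaf J (Type max u v)) :
    Nonempty (IsInitial X) ↔ toΩTop X = toΩCloseBot X := by
  refine ⟨fun ⟨hX⟩ => hX.hom_ext _ _, fun h => ⟨isInitialOfBotMem X fun V s => ?_⟩⟩
  have hs : (⊤ : Sieve V.unop) = J.close ⊥ := congrArg Subtype.val
    (ConcreteCategory.congr_hom (congr_app (congrArg InducedCategory.Hom.hom h) V) s)
  exact (J.close_eq_top_iff_mem ⊥).1 hs.symm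

instance : HasStrictInitialObjects (Sheaf J (Type max u v)) where
  out {I A} f hI := by
    have hA : Nonempty (IsInitial A) := by
      rw [nonempty_isInitial_iff_toΩTop_eq_toΩCloseBot, ← comp_toΩTop f,
        ← comp_toΩCloseBot f, hI.hom_ext (toΩTop I) (toΩCloseBot I)]
    exact isIso_of_isInitial hA.some hI f

lemma nonempty_isInitial_of_epi {X Y : Sheaf J (Type max u v)} (f : X ⟶ Y) [Epi f]
    (hX : IsInitial X) : Nonempty (IsInitial Y) := by
  rw [nonempty_isInitial_iff_toΩTop_eq_toΩCloseBot, ← cancel_epi f, comp_toΩTop,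
    comp_toΩCloseBot]
  exact hX.hom_ext _ _

lemma exists_hom_of_not_isInitial {S : ObjectProperty (Sheaf J (Type max u v))}
    (hS : S.IsSeparating) {X : Sheaf J (Type max u v)} (hX : ¬ Nonempty (IsInitial X)) :
    ∃ G, S G ∧ Nonempty (G ⟶ X) := by
  by_contra! h
  exact hX ((nonempty_isInitial_iff_toΩTop_eq_toΩCloseBot X).2
    (hS _ _ fun G hG a => (h G hG).elim a))

end CategoryTheory.Sheaf

/-- If `Sh(C,J)` has a separating set of atoms `S`, then the full subcategory on
`S` satisfies the right Ore condition. -/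
theorem stmt3 {C : Type u} [SmallCategory C] (J : GrothendieckTopology C)
    (S : Set (Sheaf J (Type u))) (hsep : ObjectProperty.IsSeparating S)
    (hatom : ∀ a ∈ S, IsAtomObj a)
    (a b c : Sheaf J (Type u)) (ha : a ∈ S) (hb : b ∈ S) (hc : c ∈ S)
    (f : a ⟶ c) (g : b ⟶ c) :
    ∃ d, d ∈ S ∧ ∃ (p : d ⟶ a) (q : d ⟶ b), p ≫ f = q ≫ g := by
  have : Sheaf.IsLocallySurjective g := (Sheaf.isLocallySurjective_iff_epi g).2
    ((hatom c hc).epi_of_not_isInitial (hatom b hb).1 g)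
  have hP : ¬ Nonempty (IsInitial (pullback f g)) := fun ⟨hP⟩ =>
    (hatom a ha).1 (Sheaf.nonempty_isInitial_of_epi (pullback.fst f g) hP)
  obtain ⟨d, hd, ⟨h⟩⟩ := Sheaf.exists_hom_of_not_isInitial hsep hP
  exact ⟨d, hd, h ≫ pullback.fst f g, h ≫ pullback.snd f g, by simp [pullback.condition]⟩
end

section
/- Let C be a small category and let J_at be the smallest Grothendieck topology on C (in the complete lattice of Grothendieck topologies on C) for which every nonempty sieve is covering. Let C' be the full subcategory of C on the objects c such that the empty sieve on c is not J_at-covering. Then C' satisfies the right Ore condition: for any morphisms f : a ⟶ c and g : b ⟶ c between objects of C' there exist d ∈ C' and morphisms p : d ⟶ a, q : d ⟶ b with p ≫ f = q ≫ g. -/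
/-! The sieve on `c` generated by `f` is nonempty, hence covering, so its pullback along `g` covers
`b`. If every arrow `q : d ⟶ b` of that pullback had `⊥` covering `d`, then `⊥` would cover `b` by
transitivity; so some `q` has `d` in the subcategory, and `q ≫ g` factors through `f`. -/

open CategoryTheory

universe u

namespace CategoryTheory.GrothendieckTopology

variable {C : Type*} [Category C] (J : GrothendieckTopology C)

theorem exists_arrow_bot_notMem_of_mem {X : C} {S : Sieve X} (hS : S ∈ J X)
    (hX : (⊥ : Sieve X) ∉ J X) : ∃ (Y : C) (f : Y ⟶ X), S f ∧ (⊥ : Sieve Y) ∉ J Y := by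
  by_contra! h
  exact hX <| J.transitive hS ⊥ fun Y f hf => by simpa only [Sieve.pullback_bot] using h Y f hf

theorem exists_comp_eq_comp_of_bot_notMem {a b c : C} (f : a ⟶ c) (g : b ⟶ c)
    (hf : Sieve.generate (Presieve.singleton f) ∈ J c) (hb : (⊥ : Sieve b) ∉ J b) :
    ∃ d : C, (⊥ : Sieve d) ∉ J d ∧ ∃ (p : d ⟶ a) (q : d ⟶ b), p ≫ f = q ≫ g := by
  obtain ⟨d, q, ⟨_, p, _, ⟨⟩, hpq⟩, hd⟩ :=
    J.exists_arrow_bot_notMem_of_mem (J.pullback_stable g hf) hb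
  exact ⟨d, hd, p, q, hpq⟩

end CategoryTheory.GrothendieckTopology

theorem stmt5_general {C : Type u} [SmallCategory C] (Jat : GrothendieckTopology C)
    (hJat : IsLeast
      {J : GrothendieckTopology C |
        ∀ (X : C) (S : Sieve X), (∃ (Y : C) (f : Y ⟶ X), S f) → S ∈ J X} Jat)
    (a b c : C) (hb : (⊥ : Sieve b) ∉ Jat b) (f : a ⟶ c) (g : b ⟶ c) :
    ∃ d : C, (⊥ : Sieve d) ∉ Jat d ∧ ∃ (p : d ⟶ a) (q : d ⟶ b), p ≫ f = q ≫ g :=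
  Jat.exists_comp_eq_comp_of_bot_notMem f g
    (hJat.1 c _ ⟨a, f, Sieve.le_generate _ _ _ (Presieve.singleton_self f)⟩) hb

/-- Let `Jat` be the smallest Grothendieck topology on `C` for which every
nonempty sieve is covering. The full subcategory of `C` on the objects whose
empty sieve is not `Jat`-covering satisfies the right Ore condition. -/
theorem stmt5 {C : Type u} [SmallCategory C] (Jat : GrothendieckTopology C)
    (hJat : IsLeast
      {J : GrothendieckTopology C |
        ∀ (X : C) (S : Sieve X), (∃ (Y : C) (f : Y ⟶ X), S f) → S ∈ J X} Jat)
    (a b c : C) (ha : (⊥ : Sieve a) ∉ Jat a) (hb : (⊥ : Sieve b) ∉ Jat b)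
    (hc : (⊥ : Sieve c) ∉ Jat c) (f : a ⟶ c) (g : b ⟶ c) :
    ∃ d : C, (⊥ : Sieve d) ∉ Jat d ∧ ∃ (p : d ⟶ a) (q : d ⟶ b), p ≫ f = q ≫ g :=
  stmt5_general Jat hJat a b c hb f g
end

section
/- Let C be a small category, J_at the smallest Grothendieck topology on C for which every nonempty sieve is covering, and C' the full subcategory of C on the objects c such that the empty sieve on c is not J_at-covering. Then for any object c of C' and any sieve R on c in C', R is nonempty if and only if the sieve on c in C generated by the morphisms of R (the pushforward of R along the full inclusion C' ⥤ C) is J_at-covering. In particular the topology induced on C' by J_at has as covering sieves exactly the nonempty sieves. -/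
open CategoryTheory

universe u

namespace CategoryTheory.Sieve

variable {C D : Type*} [Category C] [Category D]

lemma ne_bot_iff_exists_arrow {X : C} (S : Sieve X) : S ≠ ⊥ ↔ ∃ (Y : C) (f : Y ⟶ X), S f := by
  refine ⟨fun hS => ?_, fun ⟨Y, f, hf⟩ hS => ?_⟩
  · by_contra! h
    exact hS (Sieve.ext fun Y f => by simpa using h Y f)
  · rw [hS] at hf
    exact hf

lemma functorPushforward_eq_bot_iff (F : C ⥤ D) {X : C} {S : Sieve X} :
    S.functorPushforward F = ⊥ ↔ S = ⊥ := by
  simp [(functor_galoisConnection F X).l_eq_bot]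

end CategoryTheory.Sieve

/-- Let `Jat` be the smallest Grothendieck topology on `C` for which every
nonempty sieve is covering, and `C'` the full subcategory on the objects whose
empty sieve is not `Jat`-covering. A sieve `R` on an object of `C'` is nonempty
if and only if the sieve it generates in `C` is `Jat`-covering; i.e. the
topology induced on `C'` by `Jat` has exactly the nonempty sieves as covering
sieves. -/
theorem stmt6 {C : Type u} [SmallCategory C] (Jat : GrothendieckTopology C)
    (hJat : IsLeast
      {J : GrothendieckTopology C |
        ∀ (X : C) (S : Sieve X), (∃ (Y : C) (f : Y ⟶ X), S f) → S ∈ J X} Jat)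
    (c : ObjectProperty.FullSubcategory fun c : C => (⊥ : Sieve c) ∉ Jat c)
    (R : Sieve c) :
    (∃ (d : ObjectProperty.FullSubcategory fun c : C => (⊥ : Sieve c) ∉ Jat c) (f : d ⟶ c), R f) ↔
      R.functorPushforward (ObjectProperty.ι _) ∈ Jat c.obj := by
  rw [← Sieve.ne_bot_iff_exists_arrow]
  constructor
  · intro hR
    refine hJat.1 _ _ ((Sieve.ne_bot_iff_exists_arrow _).1 ?_)
    rwa [Ne, Sieve.functorPushforward_eq_bot_iff]
  · rintro hcov rfl
    exact c.property (by simpa using hcov)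
end

section
/- Let C be a small category, J_at the smallest Grothendieck topology on C for which every nonempty sieve is covering, and C' the full subcategory of C on the objects c such that the empty sieve on c is not J_at-covering. Suppose J' is a Grothendieck topology on C' whose covering sieves on every object are exactly the nonempty sieves. Then the categories of sheaves of types Sh(C, J_at) and Sh(C', J') are equivalent. -/
/-!
On an object `c` whose empty sieve does not cover, a covering sieve cannot be empty, so once
every nonempty sieve covers, the covering sieves on `c` are exactly the nonempty ones. Objects
whose empty sieve covers carry only the terminal sheaf and can be discarded, which makes the
inclusion of the remaining objects a dense subsite; the comparison lemma gives the equivalence.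
-/

open CategoryTheory CategoryTheory.Limits

universe u

namespace CategoryTheory.GrothendieckTopology

variable {C : Type*} [Category C] (J : GrothendieckTopology C)

abbrev nondegenerate : ObjectProperty C := fun c => (⊥ : Sieve c) ∉ J c

variable {J}

lemma exists_of_mem_of_bot_notMem {X : C} {S : Sieve X} (hS : S ∈ J X)
    (hX : (⊥ : Sieve X) ∉ J X) : ∃ (Y : C) (f : Y ⟶ X), S f := by
  by_contra! hempty
  exact hX (by rwa [show S = ⊥ from Sieve.ext fun Y f => iff_false_intro (hempty Y f)] at hS)

variable (hne : ∀ (X : C) (S : Sieve X), (∃ (Y : C) (f : Y ⟶ X), S f) → S ∈ J X)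
include hne

lemma isCoverDense_ι_nondegenerate : J.nondegenerate.ι.IsCoverDense J where
  is_cover X := by
    by_cases hX : (⊥ : Sieve X) ∈ J X
    · exact J.superset_covering bot_le hX
    · exact hne X _ ⟨X, 𝟙 X, Presieve.in_coverByImage _ (𝟙 (J.nondegenerate.ι.obj ⟨X, hX⟩))⟩

lemma isDenseSubsite_ι_nondegenerate (J' : GrothendieckTopology J.nondegenerate.FullSubcategory)
    (hJ' : ∀ (c : J.nondegenerate.FullSubcategory) (S : Sieve c),
      S ∈ J' c ↔ ∃ (d : J.nondegenerate.FullSubcategory) (f : d ⟶ c), S f) :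
    J.nondegenerate.ι.IsDenseSubsite J' J where
  isCoverDense' := isCoverDense_ι_nondegenerate hne
  functorPushforward_mem_iff {X S} := by
    rw [hJ']
    constructor
    · intro hS
      obtain ⟨_, _, Z, g, _, hg, _⟩ := exists_of_mem_of_bot_notMem hS X.property
      exact ⟨Z, g, hg⟩
    · rintro ⟨d, f, hf⟩
      exact hne _ _ ⟨d.obj, f.hom, d, f, 𝟙 d.obj, hf, (Category.id_comp _).symm⟩

end CategoryTheory.GrothendieckTopology

/-- Let `Jat` be the smallest Grothendieck topology on `C` for which every
nonempty sieve is covering, `C'` the full subcategory on the objects whose empty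
sieve is not `Jat`-covering, and `J'` a Grothendieck topology on `C'` whose
covering sieves are exactly the nonempty ones. Then `Sh(C, Jat) ≌ Sh(C', J')`. -/
theorem stmt7 {C : Type u} [SmallCategory C] (Jat : GrothendieckTopology C)
    (hJat : IsLeast
      {J : GrothendieckTopology C |
        ∀ (X : C) (S : Sieve X), (∃ (Y : C) (f : Y ⟶ X), S f) → S ∈ J X} Jat)
    (J' : GrothendieckTopology (ObjectProperty.FullSubcategory fun c : C => (⊥ : Sieve c) ∉ Jat c))
    (hJ' : ∀ (c : ObjectProperty.FullSubcategory fun c : C => (⊥ : Sieve c) ∉ Jat c) (S : Sieve c),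
      S ∈ J' c ↔ ∃ (d : ObjectProperty.FullSubcategory fun c : C => (⊥ : Sieve c) ∉ Jat c) (f : d ⟶ c), S f) :
    Nonempty (Sheaf Jat (Type u) ≌ Sheaf J' (Type u)) := by
  have := GrothendieckTopology.isDenseSubsite_ι_nondegenerate hJat.1 J' hJ'
  exact ⟨(Functor.IsDenseSubsite.sheafEquiv Jat.nondegenerate.ι
    (J := J') (K := Jat) (A := Type u)).symm⟩
end

section
/- Let C be a small category and J_at the smallest Grothendieck topology on C for which every nonempty sieve is covering. Then for every morphism f : a ⟶ b in C, the empty sieve on a is J_at-covering if and only if the empty sieve on b is J_at-covering. -/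
open CategoryTheory

universe u

namespace CategoryTheory.GrothendieckTopology

variable {C : Type*} [Category C] (J : GrothendieckTopology C)

lemma bot_mem_of_hom {X Y : C} (g : Y ⟶ X) (h : (⊥ : Sieve X) ∈ J X) :
    (⊥ : Sieve Y) ∈ J Y := by
  simpa only [Sieve.pullback_bot] using J.pullback_stable g h

/-- Every arrow of the sieve generated by `f` factors through `f`, so `⊥` pulls back along it
to a covering sieve. -/
lemma bot_mem_of_generate_singleton_mem {a b : C} (f : a ⟶ b)
    (hf : Sieve.generate (Presieve.singleton f) ∈ J b) (ha : (⊥ : Sieve a) ∈ J a) :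
    (⊥ : Sieve b) ∈ J b := by
  refine J.transitive hf _ ?_
  rintro Y _ ⟨Z, h, _, ⟨⟩, rfl⟩
  rw [Sieve.pullback_bot]
  exact J.bot_mem_of_hom h ha

lemma bot_mem_iff_of_generate_singleton_mem {a b : C} (f : a ⟶ b)
    (hf : Sieve.generate (Presieve.singleton f) ∈ J b) :
    (⊥ : Sieve a) ∈ J a ↔ (⊥ : Sieve b) ∈ J b :=
  ⟨J.bot_mem_of_generate_singleton_mem f hf, J.bot_mem_of_hom f⟩

end CategoryTheory.GrothendieckTopology

/-- Let `Jat` be the smallest Grothendieck topology on `C` for which every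
nonempty sieve is covering. For any morphism `f : a ⟶ b`, the empty sieve on `a`
is `Jat`-covering if and only if the empty sieve on `b` is `Jat`-covering. -/
theorem stmt8 {C : Type u} [SmallCategory C] (Jat : GrothendieckTopology C)
    (hJat : IsLeast
      {J : GrothendieckTopology C |
        ∀ (X : C) (S : Sieve X), (∃ (Y : C) (f : Y ⟶ X), S f) → S ∈ J X} Jat)
    {a b : C} (f : a ⟶ b) :
    (⊥ : Sieve a) ∈ Jat a ↔ (⊥ : Sieve b) ∈ Jat b :=
  Jat.bot_mem_iff_of_generate_singleton_mem f
    (hJat.1 b _ ⟨a, f, Sieve.le_generate _ _ _ (Presieve.singleton_self f)⟩)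
end

section
/- Let C be a small category, J a Grothendieck topology on C, and L a separating set of presheaves in [Cᵒᵖ, Type] such that for every monomorphism m : a ⟶ b of presheaves with a not initial and b ∈ L, the sheafification a_J(m) is an isomorphism in Sh(C,J). Then for every b ∈ L the sheaf a_J(b) is either an initial object of Sh(C,J) or an atom of Sh(C,J), and the set { a_J(b) : b ∈ L } is a separating set of objects of Sh(C,J). -/
open CategoryTheory CategoryTheory.Limits

universe u

namespace CategoryTheory

variable {D E : Type*} [Category D] [Category E] {F : D ⥤ E} {G : E ⥤ D}

lemma ObjectProperty.IsSeparating.image_of_adjunction (adj : F ⊣ G) [G.Faithful] {P : Set D}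
    (hP : ObjectProperty.IsSeparating P) : ObjectProperty.IsSeparating (F.obj '' P) := by
  intro X Y f g h
  refine G.map_injective (hP _ _ fun b hb k => ?_)
  obtain ⟨k, rfl⟩ := (adj.homEquiv b X).surjective k
  simp only [Adjunction.homEquiv_unit, Category.assoc, ← G.map_comp, h _ ⟨b, hb, rfl⟩ k]

namespace Adjunction

variable [G.Full] [G.Faithful] [HasPullbacks D]
  [PreservesLimitsOfShape WalkingCospan F]

noncomputable def mapPullbackUnitIso (adj : F ⊣ G) {S : E} {b : D} (m : S ⟶ F.obj b) :
    F.obj (pullback (G.map m) (adj.unit.app b)) ≅ S :=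
  haveI : IsIso (F.map (pullback.fst (G.map m) (adj.unit.app b))) :=
    ((IsPullback.of_hasPullback _ _).map F).isIso_fst_of_isIso
  asIso (F.map (pullback.fst _ _)) ≪≫ asIso (adj.counit.app S)

lemma mapPullbackUnitIso_hom_comp (adj : F ⊣ G) {S : E} {b : D} (m : S ⟶ F.obj b) :
    (adj.mapPullbackUnitIso m).hom ≫ m = F.map (pullback.snd _ _) := by
  have hsq : F.map (pullback.fst (G.map m) (adj.unit.app b)) ≫ F.map (G.map m) =
      F.map (pullback.snd _ _) ≫ F.map (adj.unit.app b) := by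
    rw [← F.map_comp, pullback.condition, F.map_comp]
  rw [mapPullbackUnitIso, Iso.trans_hom, asIso_hom, asIso_hom, Category.assoc,
    ← adj.counit_naturality, reassoc_of% hsq, adj.left_triangle_components, Category.comp_id]

lemma isInitial_or_isAtomObj_obj (adj : F ⊣ G) (b : D)
    (h : ∀ ⦃a : D⦄ (m : a ⟶ b), Mono m → ¬ Nonempty (IsInitial a) → IsIso (F.map m)) :
    Nonempty (IsInitial (F.obj b)) ∨ IsAtomObj (F.obj b) := by
  have := adj.isRightAdjoint
  have := adj.leftAdjoint_preservesColimits
  refine or_iff_not_imp_left.2 fun hb => ⟨hb, fun S m _ => ?_⟩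
  by_cases hP : Nonempty (IsInitial (pullback (G.map m) (adj.unit.app b)))
  · exact Or.inr ⟨(hP.some.isInitialObj F).ofIso (adj.mapPullbackUnitIso m)⟩
  · have := h (pullback.snd _ _) inferInstance hP
    exact Or.inl (IsIso.of_isIso_fac_left (adj.mapPullbackUnitIso_hom_comp m))

end Adjunction

end CategoryTheory

/-- If `L` is a separating set of presheaves such that every monomorphism with
non-initial domain into a member of `L` becomes an isomorphism after
`J`-sheafification, then the sheafifications of members of `L` are initial or
atoms, and they form a separating set of `Sh(C,J)`. -/
theorem stmt9 {C : Type u} [SmallCategory C] (J : GrothendieckTopology C)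
    (L : Set (Cᵒᵖ ⥤ Type u)) (hsep : ObjectProperty.IsSeparating L)
    (hdense : ∀ (a b : Cᵒᵖ ⥤ Type u) (m : a ⟶ b), Mono m →
      ¬ Nonempty (IsInitial a) → b ∈ L → IsIso ((presheafToSheaf J (Type u)).map m)) :
    (∀ b ∈ L, Nonempty (IsInitial ((presheafToSheaf J (Type u)).obj b)) ∨
      IsAtomObj ((presheafToSheaf J (Type u)).obj b)) ∧
    ObjectProperty.IsSeparating ((presheafToSheaf J (Type u)).obj '' L) := by
  have adj := sheafificationAdjunction J (Type u)
  exact ⟨fun b hb => adj.isInitial_or_isAtomObj_obj b fun a m hm ha => hdense a b m hm ha hb,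
    hsep.image_of_adjunction adj⟩
end

section
/- Let C be a small category and J a Grothendieck topology on C such that every nonempty sieve on every object of C is J-covering. Then for every object c of C, the sheafification a_J(y(c)) of the representable presheaf y(c) = Hom_C(−, c) is either an initial object of Sh(C,J) or an atom of Sh(C,J). -/
open CategoryTheory CategoryTheory.Limits

universe u

/-!
Let `η : y c ⟶ a(y c)` be the unit and `x = η_c (𝟙 c)`. For a subsheaf `m : S ↪ a(y c)`, the
sieve of arrows `g : Y ⟶ c` along which `x` restricts into `S` is either nonempty or empty.
If nonempty it covers, so `x`, and with it every section of `a(y c)` (these are locally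
restrictions of `x`, as `η` is locally surjective), lies locally in `S`: `m` is locally surjective, hence an epimorphism and an isomorphism. If empty, a
section of `S` over `X` has an empty image sieve under the locally surjective `η`, so `⊥` covers `X`;
a sheaf whose sections all live over such objects is initial.
-/

open Opposite

universe v w

namespace CategoryTheory

variable {C : Type u} [Category.{v} C] (J : GrothendieckTopology C)

namespace Presheaf

section

variable {P Q R : Cᵒᵖ ⥤ Type w} (m : P ⟶ R) (η : Q ⟶ R) [IsLocallySurjective J η]

lemma isLocallySurjective_of_imageSieve_app_mem
    (h : ∀ {X : C} (q : Q.obj (op X)), imageSieve m (η.app _ q) ∈ J X) :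
    IsLocallySurjective J m where
  imageSieve_mem s := J.transitive (imageSieve_mem J η s) _ fun _ f ⟨q, hq⟩ => by
    rw [pullback_imageSieve, ← hq]
    exact h q

lemma bot_mem_of_forall_app_ne
    (h : ∀ (X : Cᵒᵖ) (p : P.obj X) (q : Q.obj X), m.app X p ≠ η.app X q)
    {X : C} (p : P.obj (op X)) : ⊥ ∈ J X := by
  convert imageSieve_mem J η (m.app _ p)
  refine Sieve.ext fun Y f => ⟨False.elim, ?_⟩
  rintro ⟨q, hq⟩
  exact h _ (P.map f.op p) q (by rw [NatTrans.naturality_apply, hq])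

end

section

variable {P R : Cᵒᵖ ⥤ Type v} (m : P ⟶ R) {c : C} (η : yoneda.obj c ⟶ R)
  [IsLocallySurjective J η]

lemma isLocallySurjective_of_imageSieve_yonedaEquiv_mem
    (h : imageSieve m (yonedaEquiv η) ∈ J c) : IsLocallySurjective J m :=
  isLocallySurjective_of_imageSieve_app_mem J m η fun g => by
    rw [← map_yonedaEquiv, ← pullback_imageSieve]
    exact J.pullback_stable g h

lemma bot_mem_of_not_exists_imageSieve_yonedaEquiv
    (h : ¬ ∃ (Y : C) (g : Y ⟶ c), imageSieve m (yonedaEquiv η) g)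
    {X : C} (p : P.obj (op X)) : ⊥ ∈ J X :=
  bot_mem_of_forall_app_ne J m η
    (fun Y p g hg => h ⟨_, g, p, by rw [hg, map_yonedaEquiv]⟩) p

end

end Presheaf

variable {J} in
-- Every sheaf has exactly one section over an object covered by the empty sieve.
noncomputable def Sheaf.isInitialOfBotMem_s10 {S : Sheaf J (Type w)}
    (h : ∀ (X : C), S.obj.obj (op X) → ⊥ ∈ J X) : IsInitial S :=
  let unique (G : Sheaf J (Type w)) {X : Cᵒᵖ} (s : S.obj.obj X) : Unique (G.obj.obj X) :=
    Types.isTerminalEquivUnique _ (G.isTerminalOfBotCover X.unop (h X.unop s))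
  IsInitial.ofUniqueHom
    (fun G => ⟨{
      app X := TypeCat.ofHom fun s => (unique G s).default
      naturality X Y f := by ext s; exact (unique G (S.obj.map f s)).instSubsingleton.elim _ _ }⟩)
    (fun G f => by ext X s; exact (unique G s).instSubsingleton.elim _ _)

end CategoryTheory

/-- If every nonempty sieve is `J`-covering, then the sheafification of every
representable presheaf is either initial or an atom of `Sh(C,J)`. -/
theorem stmt10 {C : Type u} [SmallCategory C] (J : GrothendieckTopology C)
    (hJ : ∀ (X : C) (S : Sieve X), (∃ (Y : C) (f : Y ⟶ X), S f) → S ∈ J X)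
    (c : C) :
    Nonempty (IsInitial ((presheafToSheaf J (Type u)).obj (yoneda.obj c))) ∨
      IsAtomObj ((presheafToSheaf J (Type u)).obj (yoneda.obj c)) := by
  refine or_iff_not_imp_left.2 fun hF => ⟨hF, fun S m _ => ?_⟩
  let η := toSheafify J (yoneda.obj c)
  by_cases h : ∃ (Y : C) (g : Y ⟶ c), Presheaf.imageSieve m.hom (yonedaEquiv η) g
  · have := Presheaf.isLocallySurjective_of_imageSieve_yonedaEquiv_mem J m.hom η (hJ c _ h)
    exact Or.inl (isIso_of_mono_of_epi m)
  · exact Or.inr ⟨Sheaf.isInitialOfBotMem_s10 fun X =>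
      Presheaf.bot_mem_of_not_exists_imageSieve_yonedaEquiv J m.hom η h⟩
end

section
/- Let C be a small category satisfying the right Ore condition and let J_at be a Grothendieck topology on C whose covering sieves on every object are exactly the nonempty sieves. Then for every object c of C, the sheafification a_{J_at}(y(c)) of the representable presheaf y(c) = Hom_C(−, c) is an atom of Sh(C, J_at). -/
/-!
The empty presheaf is a sheaf for any topology without empty covering sieves, so there a sheaf
with a section is never initial, while a sheaf without sections always is. Every section of
`a(y c)` is locally the image of a morphism into `c`, so by the Ore condition any two sections
have a common restriction. Hence a subsheaf `S ↪ a(y c)` with one section `s` meets every section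
`x` along a nonempty, hence covering, sieve: the inclusion is locally surjective, and being mono it
is locally injective, so it is an isomorphism.
-/

open CategoryTheory CategoryTheory.Limits

universe u

open Opposite

namespace CategoryTheory

universe v w

variable {C : Type u} [Category.{v} C] {J : GrothendieckTopology C}

lemma isSheaf_const_pempty
    (hJ : ∀ (X : C) (S : Sieve X), S ∈ J X → ∃ (Y : C) (f : Y ⟶ X), S f) :
    Presheaf.IsSheaf J ((Functor.const Cᵒᵖ).obj PEmpty.{w + 1}) := by
  rw [isSheaf_iff_isSheaf_of_type]
  intro X S hS x _
  obtain ⟨Y, f, hf⟩ := hJ X S hS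
  exact (x f hf).elim

namespace Sheaf

lemma not_nonempty_isInitial
    (hJ : ∀ (X : C) (S : Sieve X), S ∈ J X → ∃ (Y : C) (f : Y ⟶ X), S f)
    (F : Sheaf J (Type w)) {X : Cᵒᵖ} (x : F.obj.obj X) : ¬ Nonempty (IsInitial F) :=
  fun ⟨hF⟩ => ((hF.to ⟨_, isSheaf_const_pempty hJ⟩).hom.app X x).elim

def isInitialOfIsEmpty (F : Sheaf J (Type w)) (hF : ∀ X, IsEmpty (F.obj.obj X)) :
    IsInitial F :=
  IsInitial.ofUniqueHom
    (fun G => ⟨⟨fun X => TypeCat.ofHom fun x => (hF X).elim x, fun X _ _ => by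
      ext x; exact (hF X).elim x⟩⟩)
    (fun G ψ => by ext X x; exact (hF X).elim x)

lemma isLocallyInjective_of_mono [HasSheafify J (Type w)] {F G : Sheaf J (Type w)} (m : F ⟶ G)
    [Mono m] : IsLocallyInjective m := by
  have : Mono m.hom := (sheafToPresheaf J _).map_mono m
  exact Presheaf.isLocallyInjective_of_injective J m.hom fun X =>
    (mono_iff_injective _).1 (NatTrans.mono_iff_mono_app m.hom |>.1 this X)

end Sheaf

namespace Presheaf

def HasCommonRestrictions (Q : Cᵒᵖ ⥤ Type w) : Prop :=
  ∀ ⦃U V : C⦄ (x : Q.obj (op U)) (z : Q.obj (op V)),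
    ∃ (W : C) (p : W ⟶ U) (q : W ⟶ V), Q.map p.op x = Q.map q.op z

lemma hasCommonRestrictions_of_isLocallySurjective
    (hOre : GrothendieckTopology.RightOreCondition C)
    (hJ : ∀ (X : C) (S : Sieve X), S ∈ J X → ∃ (Y : C) (f : Y ⟶ X), S f)
    {c : C} {Q : Cᵒᵖ ⥤ Type v} (η : yoneda.obj c ⟶ Q) [IsLocallySurjective J η] :
    HasCommonRestrictions Q := by
  intro U V x z
  obtain ⟨U', f, t, ht⟩ := hJ _ _ (imageSieve_mem J η (U := op U) x)
  obtain ⟨V', g, s, hs⟩ := hJ _ _ (imageSieve_mem J η (U := op V) z)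
  obtain ⟨W, p, q, hpq⟩ := hOre t s
  refine ⟨W, p ≫ f, q ≫ g, ?_⟩
  simp only [op_comp, Functor.map_comp_apply, ← ht, ← hs, ← NatTrans.naturality_apply]
  exact congrArg (η.app (op W)) hpq

lemma isLocallySurjective_of_hasCommonRestrictions
    (hJ : ∀ (X : C) (S : Sieve X), (∃ (Y : C) (f : Y ⟶ X), S f) → S ∈ J X)
    {P Q : Cᵒᵖ ⥤ Type w} (m : P ⟶ Q) (hQ : HasCommonRestrictions Q) {V : C}
    (s : P.obj (op V)) : IsLocallySurjective J m where
  imageSieve_mem x := by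
    obtain ⟨W, p, q, h⟩ := hQ x (m.app _ s)
    exact hJ _ _ ⟨W, p, P.map q.op s, by rw [NatTrans.naturality_apply, h]⟩

end Presheaf

lemma Sheaf.isIso_of_mono_of_hasCommonRestrictions [HasSheafify J (Type w)]
    (hJ : ∀ (X : C) (S : Sieve X), (∃ (Y : C) (f : Y ⟶ X), S f) → S ∈ J X)
    {F G : Sheaf J (Type w)} (m : F ⟶ G) [Mono m] (hG : Presheaf.HasCommonRestrictions G.obj)
    {V : C} (s : F.obj.obj (op V)) : IsIso m :=
  (isLocallyBijective_iff_isIso m).1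
    ⟨isLocallyInjective_of_mono m,
      Presheaf.isLocallySurjective_of_hasCommonRestrictions hJ m.hom hG s⟩

end CategoryTheory

/-- If `C` satisfies the right Ore condition and `Jat` is the topology whose
covering sieves are exactly the nonempty ones, then the sheafification of every
representable is an atom of `Sh(C, Jat)`. -/
theorem stmt13 {C : Type u} [SmallCategory C]
    (hOre : ∀ {a b c : C} (f : a ⟶ c) (g : b ⟶ c),
      ∃ (d : C) (p : d ⟶ a) (q : d ⟶ b), p ≫ f = q ≫ g)
    (Jat : GrothendieckTopology C)
    (hJat : ∀ (X : C) (S : Sieve X), S ∈ Jat X ↔ ∃ (Y : C) (f : Y ⟶ X), S f)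
    (c : C) :
    IsAtomObj ((presheafToSheaf Jat (Type u)).obj (yoneda.obj c)) := by
  have hCover : ∀ (X : C) (S : Sieve X), S ∈ Jat X → ∃ (Y : C) (f : Y ⟶ X), S f :=
    fun X S => (hJat X S).1
  have hA := Presheaf.hasCommonRestrictions_of_isLocallySurjective (fun f g => hOre f g) hCover
    (toSheafify Jat (yoneda.obj c))
  refine ⟨Sheaf.not_nonempty_isInitial hCover _
    ((toSheafify Jat (yoneda.obj c)).app (op c) (𝟙 c)), fun S m _ => ?_⟩
  by_cases hS : ∀ X, IsEmpty (S.obj.obj X)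
  · exact Or.inr ⟨Sheaf.isInitialOfIsEmpty S hS⟩
  · push Not at hS
    obtain ⟨X, ⟨s⟩⟩ := hS
    exact Or.inl (Sheaf.isIso_of_mono_of_hasCommonRestrictions (fun X S => (hJat X S).2) m hA s)
end

section
/- Let C be a small category satisfying the right Ore condition and let J_at be a Grothendieck topology on C whose covering sieves on every object are exactly the nonempty sieves. Then a J_at-sheaf F is an atom of Sh(C, J_at) if and only if there exist an object c of C and an epimorphism a_{J_at}(y(c)) ⟶ F in Sh(C, J_at), where y(c) is the representable presheaf on c. -/
/-!
For an atomic site the initial sheaf is the empty one, so a sheaf is initial exactly when it has no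
sections. If `F` has a section `u` over `c`, the induced map `a(y c) ⟶ F` has a non-initial image,
which the atom `F` forces to be all of `F`. Conversely, if `a(y c) ⟶ F` is epi, every section of
`F` is locally a restriction of the generic section `u` over `c`; given any non-empty subsheaf
`S ⊆ F`, the Ore condition lets one match a restriction of `u` lying in `S` with a restriction of
an arbitrary section, so `S ⟶ F` is locally surjective, hence epi, hence an isomorphism.
-/

open CategoryTheory CategoryTheory.Limits

universe u

open Opposite

universe v w

namespace CategoryTheory

variable {C : Type u} [Category.{v} C] {J : GrothendieckTopology C}

lemma Presheaf.isSheaf_const_pEmpty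
    (hJ : ∀ (X : C) (S : Sieve X), S ∈ J X → ∃ (Y : C) (f : Y ⟶ X), S f) :
    Presheaf.IsSheaf J ((Functor.const Cᵒᵖ).obj (PEmpty.{w + 1} : Type w)) := by
  rw [isSheaf_iff_isSheaf_of_type]
  intro X S hS x _
  obtain ⟨Y, f, hf⟩ := hJ X S hS
  exact (x f hf).elim

lemma Sheaf.not_nonempty_isInitial_iff
    (hJ : ∀ (X : C) (S : Sieve X), S ∈ J X → ∃ (Y : C) (f : Y ⟶ X), S f)
    (A : Sheaf J (Type w)) :
    ¬ Nonempty (IsInitial A) ↔ ∃ X, Nonempty (A.obj.obj X) := by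
  constructor
  · intro hA
    by_contra! hempty
    exact hA ⟨IsInitial.ofUniqueHom
      (fun _ => ObjectProperty.homMk
        { app := fun X => TypeCat.ofHom fun x => (hempty X).elim x
          naturality := fun X _ _ => by ext x; exact (hempty X).elim x })
      (fun _ _ => by ext X x; exact (hempty X).elim x)⟩
  · rintro ⟨X, ⟨x⟩⟩ ⟨hA⟩
    exact ((hA.to ⟨_, Presheaf.isSheaf_const_pEmpty hJ⟩).hom.app X x).elim

lemma Sheaf.epi_of_isAtomObj
    (hJ : ∀ (X : C) (S : Sieve X), S ∈ J X → ∃ (Y : C) (f : Y ⟶ X), S f)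
    {G F : Sheaf J (Type w)} (hF : IsAtomObj F) (f : G ⟶ F) (hG : ∃ X, Nonempty (G.obj.obj X)) :
    Epi f := by
  rcases hF.2 (Sheaf.imageι f) inferInstance with hiso | hinit
  · rw [← Sheaf.toImage_ι f]
    exact epi_comp _ _
  · obtain ⟨X, ⟨x⟩⟩ := hG
    exact absurd hinit <|
      (Sheaf.not_nonempty_isInitial_iff hJ _).2 ⟨X, ⟨(Sheaf.toImage f).hom.app X x⟩⟩

def Presheaf.IsLocallyGeneratedBy (P : Cᵒᵖ ⥤ Type w) {c : C} (u : P.obj (op c)) : Prop :=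
  ∀ ⦃X : C⦄ (x : P.obj (op X)),
    ∃ (Z : C) (g : Z ⟶ X) (h : Z ⟶ c), P.map g.op x = P.map h.op u

lemma Presheaf.isLocallyGeneratedBy_yonedaEquiv
    (hJ : ∀ (X : C) (S : Sieve X), S ∈ J X → ∃ (Y : C) (f : Y ⟶ X), S f)
    {P : Cᵒᵖ ⥤ Type v} {c : C} (φ : yoneda.obj c ⟶ P) [Presheaf.IsLocallySurjective J φ] :
    Presheaf.IsLocallyGeneratedBy P (yonedaEquiv φ) := by
  intro X x
  obtain ⟨Z, g, h, hh⟩ := hJ X _ (Presheaf.imageSieve_mem J φ x)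
  exact ⟨Z, g, h, hh.symm.trans (map_yonedaEquiv φ h).symm⟩

lemma Presheaf.isLocallySurjective_of_isLocallyGeneratedBy
    (hOre : ∀ {a b c : C} (f : a ⟶ c) (g : b ⟶ c),
      ∃ (d : C) (p : d ⟶ a) (q : d ⟶ b), p ≫ f = q ≫ g)
    (hJ : ∀ (X : C) (S : Sieve X), (∃ (Y : C) (f : Y ⟶ X), S f) → S ∈ J X)
    {G P : Cᵒᵖ ⥤ Type w} (m : G ⟶ P) {c : C} {u : P.obj (op c)}
    (hu : Presheaf.IsLocallyGeneratedBy P u) (hG : ∃ X, Nonempty (G.obj X)) :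
    Presheaf.IsLocallySurjective J m := by
  obtain ⟨⟨D⟩, ⟨s⟩⟩ := hG
  obtain ⟨Z₀, k, h₀, hk⟩ := hu (m.app _ s)
  have hs : m.app _ (G.map k.op s) = P.map h₀.op u := by
    rw [← hk]
    exact NatTrans.naturality_apply m k.op s
  refine ⟨fun {X} x => hJ X _ ?_⟩
  obtain ⟨Z, g, h, hx⟩ := hu x
  obtain ⟨W, p, q, hpq⟩ := hOre h h₀
  refine ⟨W, p ≫ g, G.map q.op (G.map k.op s), ?_⟩
  rw [NatTrans.naturality_apply, hs, op_comp, Functor.map_comp_apply, hx,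
    ← Functor.map_comp_apply, ← Functor.map_comp_apply, ← op_comp, ← op_comp, hpq]

end CategoryTheory

/-- If `C` satisfies the right Ore condition and `Jat` is the topology whose
covering sieves are exactly the nonempty ones, then a sheaf `F` is an atom of
`Sh(C, Jat)` if and only if it is an epimorphic image of the sheafification of
some representable. -/
theorem stmt14 {C : Type u} [SmallCategory C]
    (hOre : ∀ {a b c : C} (f : a ⟶ c) (g : b ⟶ c),
      ∃ (d : C) (p : d ⟶ a) (q : d ⟶ b), p ≫ f = q ≫ g)
    (Jat : GrothendieckTopology C)
    (hJat : ∀ (X : C) (S : Sieve X), S ∈ Jat X ↔ ∃ (Y : C) (f : Y ⟶ X), S f)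
    (F : Sheaf Jat (Type u)) :
    IsAtomObj F ↔
      ∃ (c : C) (e : (presheafToSheaf Jat (Type u)).obj (yoneda.obj c) ⟶ F), Epi e := by
  have hne := fun X S => (hJat X S).1
  constructor
  · intro hF
    obtain ⟨⟨c⟩, ⟨u⟩⟩ := (Sheaf.not_nonempty_isInitial_iff hne F).1 hF.1
    let e : (presheafToSheaf Jat (Type u)).obj (yoneda.obj c) ⟶ F :=
      ObjectProperty.homMk (sheafifyLift Jat (yonedaEquiv.symm u) F.property)
    exact ⟨c, e, Sheaf.epi_of_isAtomObj hne hF e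
      ⟨op c, ⟨yonedaEquiv (toSheafify Jat (yoneda.obj c))⟩⟩⟩
  · rintro ⟨c, e, he⟩
    have : Presheaf.IsLocallySurjective Jat e.hom := (Sheaf.isLocallySurjective_iff_epi e).2 he
    let φ := toSheafify Jat (yoneda.obj c) ≫ e.hom
    have hgen := Presheaf.isLocallyGeneratedBy_yonedaEquiv hne φ
    refine ⟨(Sheaf.not_nonempty_isInitial_iff hne F).2 ⟨op c, ⟨yonedaEquiv φ⟩⟩,
      fun S m _ => ?_⟩
    by_cases hS : Nonempty (IsInitial S)
    · exact Or.inr hS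
    · have : Sheaf.IsLocallySurjective m :=
        Presheaf.isLocallySurjective_of_isLocallyGeneratedBy hOre (fun X S => (hJat X S).2)
          m.hom hgen ((Sheaf.not_nonempty_isInitial_iff hne S).1 hS)
      exact Or.inl (isIso_of_mono_of_epi m)
end
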